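/- arXiv:math/0010003 — 6 statements merged into one kernel-verified Lean document; each statement's English description precedes it below -/
import Mathlib

section
/- Suppose Q is saturated, i.e. Q = {x ∈ ℤ^d : τ_i(x) ≥ 0 for all i = 1, …, r}. If ε ∈ ℤ^d is an essential point for Q and q ∈ Q, then ε + q is an essential point for Q; consequently the essential set ℰ of Q consists entirely of essential points. -/
/-- The shift `α + S = {α + s : s ∈ S}` of a set `S ⊆ ℤ^d` by `α ∈ ℤ^d`. -/
def shiftSet {d : ℕ} (α : Fin d → ℤ) (S : Set (Fin d → ℤ)) : Set (Fin d → ℤ) :=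
  (α + ·) '' S

/-- An essential point for `Q` is an `ε ∈ ℤ^d` such that whenever `a ∈ Q` satisfies
`(a + ε + Q) ∩ Q = (ε + Q) ∩ Q`, `a` is a unit of `Q` (i.e. `-a ∈ Q`). -/
def essentialPoint {d : ℕ} (Q : AddSubmonoid (Fin d → ℤ)) (ε : Fin d → ℤ) : Prop :=
  ∀ a ∈ Q, shiftSet (a + ε) (Q : Set (Fin d → ℤ)) ∩ (Q : Set (Fin d → ℤ)) =
      shiftSet ε (Q : Set (Fin d → ℤ)) ∩ (Q : Set (Fin d → ℤ)) → -a ∈ Q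

/-- The essential set `ℰ` of `Q`: the `Q`-set generated by the essential points. -/
def essentialSet {d : ℕ} (Q : AddSubmonoid (Fin d → ℤ)) : Set (Fin d → ℤ) :=
  {x | ∃ ε q, essentialPoint Q ε ∧ q ∈ Q ∧ x = ε + q}

/-!
If `(a + ε + q + Q) ∩ Q = (ε + q + Q) ∩ Q`, then already `(a + ε + Q) ∩ Q = (ε + Q) ∩ Q`:
the inclusion `⊆` holds for every `a ∈ Q`, and for `x ∈ (ε + Q) ∩ Q` the point `x + q` lies in
`(ε + q + Q) ∩ Q`, hence in `a + ε + q + Q`, so `x ∈ a + ε + Q` by cancelling `q` in `ℤ^d`.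
-/

section

variable {d : ℕ}

lemma mem_shiftSet {α x : Fin d → ℤ} {S : Set (Fin d → ℤ)} :
    x ∈ shiftSet α S ↔ x - α ∈ S := by
  constructor
  · rintro ⟨s, hs, rfl⟩
    simpa using hs
  · intro h
    exact ⟨x - α, h, add_sub_cancel α x⟩

lemma add_mem_shiftSet_add_iff {α x q : Fin d → ℤ} {S : Set (Fin d → ℤ)} :
    x + q ∈ shiftSet (α + q) S ↔ x ∈ shiftSet α S := by
  simp only [mem_shiftSet, add_sub_add_right_eq_sub]

lemma shiftSet_add_subset {Q : AddSubmonoid (Fin d → ℤ)} {a : Fin d → ℤ} (ha : a ∈ Q)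
    (ε : Fin d → ℤ) : shiftSet (a + ε) (Q : Set (Fin d → ℤ)) ⊆ shiftSet ε Q := by
  intro x hx
  rw [mem_shiftSet] at hx ⊢
  simpa [sub_add_eq_sub_sub_swap] using Q.add_mem hx ha

lemma essentialPoint.add_mem {Q : AddSubmonoid (Fin d → ℤ)} {ε q : Fin d → ℤ}
    (hε : essentialPoint Q ε) (hq : q ∈ Q) : essentialPoint Q (ε + q) := by
  intro a ha hshift
  refine hε a ha (subset_antisymm (Set.inter_subset_inter_left _ (shiftSet_add_subset ha ε)) ?_)
  rintro x ⟨hxε, hxQ⟩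
  have hxq : x + q ∈ shiftSet (a + (ε + q)) (Q : Set (Fin d → ℤ)) ∩ Q := by
    rw [hshift]
    exact ⟨add_mem_shiftSet_add_iff.2 hxε, Q.add_mem hxQ hq⟩
  rw [← add_assoc] at hxq
  exact ⟨add_mem_shiftSet_add_iff.1 hxq.1, hxQ⟩

end

theorem stmt4_general {d : ℕ} (Q : AddSubmonoid (Fin d → ℤ)) :
    (∀ ε : Fin d → ℤ, ∀ q ∈ Q, essentialPoint Q ε → essentialPoint Q (ε + q)) ∧
      (∀ x ∈ essentialSet Q, essentialPoint Q x) := by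
  refine ⟨fun ε q hq hε => hε.add_mem hq, ?_⟩
  rintro _ ⟨ε, q, hε, hq, rfl⟩
  exact hε.add_mem hq

/-- Suppose `Q` is saturated, i.e. `Q = {x : τ_i(x) ≥ 0 ∀ i}`.  If `ε` is an essential
point for `Q` and `q ∈ Q`, then `ε + q` is an essential point for `Q`; consequently the
essential set `ℰ` of `Q` consists entirely of essential points. -/
theorem stmt4 {d r : ℕ} (Q : AddSubmonoid (Fin d → ℤ)) (hFG : Q.FG)
    (hgp : AddSubgroup.closure (Q : Set (Fin d → ℤ)) = ⊤)
    (τ : Fin r → ((Fin d → ℤ) →+ ℤ))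
    (hτQ : ∀ i, ∀ x ∈ Q, 0 ≤ τ i x)
    (hsat : ∀ x : Fin d → ℤ, x ∈ Q ↔ ∀ i, 0 ≤ τ i x) :
    (∀ ε : Fin d → ℤ, ∀ q ∈ Q, essentialPoint Q ε → essentialPoint Q (ε + q)) ∧
      (∀ x ∈ essentialSet Q, essentialPoint Q x) :=
  stmt4_general Q
end

section
/- For every face F of Q there exists an element a_F ∈ F such that a_F + Q^F ⊆ Q, where Q^F = (Q + F^gp) ∩ Q^sat is the partial saturation of Q at F. -/
/-- A face of `Q`: a submonoid `F ⊆ Q` such that `a + b ∈ F` with `a, b ∈ Q` forces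
`a ∈ F` and `b ∈ F`. -/
def IsFaceOfMonoid {d : ℕ} (Q F : AddSubmonoid (Fin d → ℤ)) : Prop :=
  (F : Set (Fin d → ℤ)) ⊆ (Q : Set (Fin d → ℤ)) ∧
    ∀ a ∈ Q, ∀ b ∈ Q, a + b ∈ F → a ∈ F ∧ b ∈ F

/-- The saturation `Q^sat = {x ∈ ℤ^d : n • x ∈ Q for some integer n ≥ 1}`. -/
def saturationOf {d : ℕ} (Q : AddSubmonoid (Fin d → ℤ)) : Set (Fin d → ℤ) :=
  {x | ∃ n : ℕ, 1 ≤ n ∧ n • x ∈ Q}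

/-- The partial saturation `Q^F = (Q + F^gp) ∩ Q^sat` of `Q` at a face `F`. -/
def partialSat {d : ℕ} (Q F : AddSubmonoid (Fin d → ℤ)) : Set (Fin d → ℤ) :=
  {x | ∃ q ∈ Q, ∃ g ∈ AddSubgroup.closure (F : Set (Fin d → ℤ)), x = q + g} ∩
    saturationOf Q

/-!
Since `Q^F ⊆ Q^sat`, everything rests on `Q^sat ⊆ B + Q` for a finite box `B`: if
`n • x = ∑ aᵢ sᵢ` over the generators `sᵢ` of `Q`, then `x - ∑ (aᵢ / n) sᵢ` is `1/n` times
`∑ (aᵢ % n) sᵢ`, whose coordinates are bounded by those of `∑ |sᵢ|`. By Dickson's lemma on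
coefficient vectors in `ℕ^s`, the points of `Q^F` over each `b ∈ B` are generated over `Q` by
finitely many of them, so `Q^F ⊆ Y + Q` for a finite `Y ⊆ Q^F`. Every `y ∈ Y` has the form
`q + f - f'` with `f, f' ∈ F`, so `f' + y ∈ Q`, and the sum of these `f'` is the required `a_F`.
-/

open Pointwise

theorem exists_finite_subset_forall_exists_le {α : Type*} [PartialOrder α]
    [WellQuasiOrderedLE α] (S : Set α) :
    ∃ G ⊆ S, G.Finite ∧ ∀ x ∈ S, ∃ g ∈ G, g ≤ x := by
  refine ⟨{x | Minimal (· ∈ S) x}, fun x hx => hx.prop,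
    WellQuasiOrderedLE.finite_of_isAntichain (setOfPred_minimal_antichain _), fun x hx => ?_⟩
  obtain ⟨g, hgx, hg⟩ := exists_minimal_le_of_wellFoundedLT (· ∈ S) x hx
  exact ⟨g, hg, hgx⟩

theorem AddSubmonoid.FG.exists_finite_subset_add_of_subset_finite_add {M : Type*}
    [AddCommMonoid M] {Q : AddSubmonoid M} (hQ : Q.FG) {B S : Set M} (hB : B.Finite)
    (hS : S ⊆ B + Q) : ∃ Y ⊆ S, Y.Finite ∧ S ⊆ Y + Q := by
  obtain ⟨s, rfl⟩ := hQ
  set comb : (s → ℕ) →ₗ[ℕ] M := Fintype.linearCombination ℕ Subtype.val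
  have comb_mem (c : s → ℕ) : comb c ∈ AddSubmonoid.closure (s : Set M) :=
    AddSubmonoid.mem_closure_finset'.2 ⟨c, Fintype.linearCombination_apply _ _ _⟩
  choose G hGS hGfin hGle using fun b : M =>
    exists_finite_subset_forall_exists_le {c : s → ℕ | b + comb c ∈ S}
  refine ⟨⋃ b ∈ B, (fun c => b + comb c) '' G b, ?_,
    hB.biUnion fun b _ => (hGfin b).image _, fun x hx => ?_⟩
  · simp only [Set.iUnion_subset_iff, Set.image_subset_iff]
    exact fun b _ => hGS b
  obtain ⟨b, hb, q, hq, rfl⟩ := hS hx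
  obtain ⟨c, rfl⟩ : ∃ c, comb c = q := by
    obtain ⟨c, rfl⟩ := AddSubmonoid.mem_closure_finset'.1 hq
    exact ⟨c, Fintype.linearCombination_apply _ _ _⟩
  obtain ⟨g, hg, hgc⟩ := hGle b c hx
  refine ⟨b + comb g, Set.mem_biUnion hb (Set.mem_image_of_mem _ hg), comb (c - g),
    comb_mem _, ?_⟩
  change b + comb g + comb (c - g) = b + comb c
  rw [add_assoc, ← map_add, add_tsub_cancel_of_le hgc]

theorem abs_le_sum_abs_of_nsmul_eq_sum {α ι : Type*} [AddCommGroup α] [LinearOrder α]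
    [IsOrderedAddMonoid α] [Fintype ι] {n : ℕ} (hn : n ≠ 0) {b : α} {r : ι → ℕ}
    {v : ι → α} (hr : ∀ i, r i ≤ n) (h : n • b = ∑ i, r i • v i) :
    |b| ≤ ∑ i, |v i| := by
  rw [← nsmul_le_nsmul_iff_right hn, ← abs_nsmul, h, Finset.smul_sum]
  calc |∑ i, r i • v i| ≤ ∑ i, |r i • v i| := Finset.abs_sum_le_sum_abs _ _
    _ = ∑ i, r i • |v i| := by simp only [abs_nsmul]
    _ ≤ ∑ i, n • |v i| := Finset.sum_le_sum fun i _ => nsmul_le_nsmul_left (abs_nonneg _) (hr i)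

theorem saturationOf_subset_finite_add {d : ℕ} {Q : AddSubmonoid (Fin d → ℤ)} (hQ : Q.FG) :
    ∃ B : Set (Fin d → ℤ), B.Finite ∧ saturationOf Q ⊆ B + Q := by
  obtain ⟨s, rfl⟩ := hQ
  refine ⟨Set.Icc (-∑ i : s, |i.1|) (∑ i : s, |i.1|), Set.finite_Icc _ _, ?_⟩
  rintro x ⟨n, hn, hnx⟩
  obtain ⟨a, ha⟩ := AddSubmonoid.mem_closure_finset'.1 hnx
  set k : Fin d → ℤ := ∑ i : s, (a i / n) • i.1
  have hk : k ∈ AddSubmonoid.closure (s : Set (Fin d → ℤ)) :=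
    AddSubmonoid.mem_closure_finset'.2 ⟨fun i => a i / n, rfl⟩
  have hrem : n • (x - k) = ∑ i : s, (a i % n) • i.1 := by
    rw [smul_sub, ha, Finset.smul_sum, sub_eq_iff_eq_add, ← Finset.sum_add_distrib]
    refine Finset.sum_congr rfl fun i _ => ?_
    rw [smul_smul, ← add_smul, Nat.mod_add_div]
  have hbound (j : Fin d) : |(x - k) j| ≤ ∑ i : s, |i.1 j| := by
    refine abs_le_sum_abs_of_nsmul_eq_sum (by omega) (r := fun i => a i % n)
      (fun i => (Nat.mod_lt _ (by omega)).le) ?_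
    simpa only [Pi.smul_apply, Finset.sum_apply] using congrFun hrem j
  rw [← sub_add_cancel x k]
  refine Set.add_mem_add ⟨fun j => ?_, fun j => ?_⟩ hk <;>
    simp only [Pi.neg_apply, Finset.sum_apply, Pi.abs_apply]
  exacts [(abs_le.1 (hbound j)).1, (abs_le.1 (hbound j)).2]

theorem AddSubgroup.exists_add_mem_of_mem_closure {G : Type*} [AddCommGroup G]
    {F : AddSubmonoid G} {g : G} (hg : g ∈ AddSubgroup.closure (F : Set G)) :
    ∃ f ∈ F, f + g ∈ F := by
  induction hg using AddSubgroup.closure_induction with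
  | mem x hx => exact ⟨0, F.zero_mem, by simpa using hx⟩
  | zero => exact ⟨0, F.zero_mem, by simp⟩
  | add x y _ _ ihx ihy =>
    obtain ⟨f, hf, hfx⟩ := ihx
    obtain ⟨f', hf', hfy⟩ := ihy
    exact ⟨f + f', F.add_mem hf hf', by simpa [add_add_add_comm] using F.add_mem hfx hfy⟩
  | neg x _ ihx =>
    obtain ⟨f, hf, hfx⟩ := ihx
    exact ⟨f + x, hfx, by simpa using hf⟩

theorem exists_mem_forall_add_mem_add_of_finite {M : Type*} [AddCommMonoid M]
    {F Q : AddSubmonoid M} (hFQ : F ≤ Q) {Y : Set M} (hY : Y.Finite)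
    (h : ∀ y ∈ Y, ∃ f ∈ F, f + y ∈ Q) : ∃ a ∈ F, ∀ x ∈ Y + Q, a + x ∈ Q := by
  suffices ∃ a ∈ F, ∀ y ∈ Y, a + y ∈ Q by
    obtain ⟨a, ha, haY⟩ := this
    refine ⟨a, ha, ?_⟩
    rintro _ ⟨y, hy, q, hq, rfl⟩
    rw [← add_assoc]
    exact Q.add_mem (haY y hy) hq
  induction Y, hY using Set.Finite.induction_on with
  | empty => exact ⟨0, F.zero_mem, by simp⟩
  | @insert y Y _ _ ih =>
    obtain ⟨a, ha, haY⟩ := ih fun y' hy' => h y' (Set.mem_insert_of_mem _ hy')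
    obtain ⟨f, hf, hfy⟩ := h y (Set.mem_insert _ _)
    refine ⟨a + f, F.add_mem ha hf, Set.forall_mem_insert.2 ⟨?_, fun y' hy' => ?_⟩⟩
    · rw [add_assoc]; exact Q.add_mem (hFQ ha) hfy
    · rw [add_right_comm]; exact Q.add_mem (haY y' hy') (hFQ hf)

theorem stmt9_general {d : ℕ} (Q : AddSubmonoid (Fin d → ℤ)) (hFG : Q.FG)
    (F : AddSubmonoid (Fin d → ℤ)) (hF : IsFaceOfMonoid Q F) :
    ∃ aF ∈ F, ∀ x ∈ partialSat Q F, aF + x ∈ Q := by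
  obtain ⟨B, hB, hsat⟩ := saturationOf_subset_finite_add hFG
  obtain ⟨Y, hYQF, hY, hQFY⟩ := hFG.exists_finite_subset_add_of_subset_finite_add hB
    (S := partialSat Q F) (Set.inter_subset_right.trans hsat)
  have hFQ : F ≤ Q := fun _ hf => hF.1 hf
  obtain ⟨a, haF, ha⟩ := exists_mem_forall_add_mem_add_of_finite hFQ hY fun y hy => by
    obtain ⟨⟨q, hq, g, hg, rfl⟩, -⟩ := hYQF hy
    obtain ⟨f, hf, hfg⟩ := AddSubgroup.exists_add_mem_of_mem_closure hg
    exact ⟨f, hf, by rw [add_left_comm]; exact Q.add_mem hq (hFQ hfg)⟩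
  exact ⟨a, haF, fun x hx => ha x (hQFY hx)⟩

/-- For every face `F` of `Q` there exists `a_F ∈ F` with `a_F + Q^F ⊆ Q`. -/
theorem stmt9 {d : ℕ} (Q : AddSubmonoid (Fin d → ℤ)) (hFG : Q.FG)
    (hgp : AddSubgroup.closure (Q : Set (Fin d → ℤ)) = ⊤)
    (F : AddSubmonoid (Fin d → ℤ)) (hF : IsFaceOfMonoid Q F) :
    ∃ aF ∈ F, ∀ x ∈ partialSat Q F, aF + x ∈ Q :=
  stmt9_general Q hFG F hF
end

section
/- Let F be a face of Q and b ∈ F with b + Q^F ⊆ Q. Then Q ∩ (b + Q^sat) = b + Q^F. -/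
theorem partialSat_subset_saturationOf {d : ℕ} (Q F : AddSubmonoid (Fin d → ℤ)) :
    partialSat Q F ⊆ saturationOf Q :=
  Set.inter_subset_right

theorem mem_partialSat_of_add_mem {d : ℕ} {Q F : AddSubmonoid (Fin d → ℤ)}
    {b s : Fin d → ℤ} (hb : b ∈ F) (hbs : b + s ∈ Q) (hs : s ∈ saturationOf Q) :
    s ∈ partialSat Q F :=
  ⟨⟨b + s, hbs, -b, neg_mem (AddSubgroup.subset_closure hb), by abel⟩, hs⟩

theorem stmt11_general {d : ℕ} (Q : AddSubmonoid (Fin d → ℤ))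
    (F : AddSubmonoid (Fin d → ℤ))
    (b : Fin d → ℤ) (hb : b ∈ F)
    (hbQ : ∀ x ∈ partialSat Q F, b + x ∈ Q) :
    (Q : Set (Fin d → ℤ)) ∩ shiftSet b (saturationOf Q) =
      shiftSet b (partialSat Q F) := by
  ext x
  constructor
  · rintro ⟨hxQ, s, hs, rfl⟩
    exact ⟨s, mem_partialSat_of_add_mem hb hxQ hs, rfl⟩
  · rintro ⟨s, hs, rfl⟩
    exact ⟨hbQ s hs, s, partialSat_subset_saturationOf Q F hs, rfl⟩

/-- Let `F` be a face of `Q` and `b ∈ F` with `b + Q^F ⊆ Q`.  Then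
`Q ∩ (b + Q^sat) = b + Q^F`. -/
theorem stmt11 {d : ℕ} (Q : AddSubmonoid (Fin d → ℤ)) (hFG : Q.FG)
    (hgp : AddSubgroup.closure (Q : Set (Fin d → ℤ)) = ⊤)
    (F : AddSubmonoid (Fin d → ℤ)) (hF : IsFaceOfMonoid Q F)
    (b : Fin d → ℤ) (hb : b ∈ F)
    (hbQ : ∀ x ∈ partialSat Q F, b + x ∈ Q) :
    (Q : Set (Fin d → ℤ)) ∩ shiftSet b (saturationOf Q) =
      shiftSet b (partialSat Q F) :=
  stmt11_general Q F b hb hbQ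
end

section
/- Suppose a_Q ∈ Q is such that for every face F of Q there exists a_F ∈ F with a_F + Q^F ⊆ Q and τ_i(a_F) ≤ τ_i(a_Q) for all i = 1, …, r. If a ∈ Q and β ∈ ℤ^d satisfy τ(a_Q + β)⁺ = τ(a + a_Q + β)⁺, then (β + Q) ∩ Q = (a + β + Q) ∩ Q. -/
/-- The vector `ζ⁺ ∈ ℕ^r` obtained from `ζ ∈ ℤ^r` by replacing every negative
entry with `0`. -/
def plusPart {r : ℕ} (ζ : Fin r → ℤ) : Fin r → ℕ := fun i => (ζ i).toNat

section SupportFace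

variable {d : ℕ} {ι : Type*} (Q : AddSubmonoid (Fin d → ℤ)) (τ : ι → (Fin d → ℤ) →+ ℤ)

def supportFace (a : Fin d → ℤ) : AddSubmonoid (Fin d → ℤ) where
  carrier := {x | x ∈ Q ∧ ∀ i, τ i a = 0 → τ i x = 0}
  zero_mem' := ⟨Q.zero_mem, fun i _ => map_zero (τ i)⟩
  add_mem' := by
    rintro u v ⟨hu, hu'⟩ ⟨hv, hv'⟩
    exact ⟨Q.add_mem hu hv, fun i hi => by rw [map_add, hu' i hi, hv' i hi, add_zero]⟩

variable {Q τ}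

lemma mem_supportFace_self {a : Fin d → ℤ} (ha : a ∈ Q) : a ∈ supportFace Q τ a :=
  ⟨ha, fun _ hi => hi⟩

lemma isFaceOfMonoid_supportFace (hτQ : ∀ i, ∀ x ∈ Q, 0 ≤ τ i x) (a : Fin d → ℤ) :
    IsFaceOfMonoid Q (supportFace Q τ a) := by
  refine ⟨fun x hx => hx.1, fun u hu v hv ⟨_, huv⟩ => ⟨⟨hu, fun i hi => ?_⟩, ⟨hv, fun i hi => ?_⟩⟩⟩
  all_goals
    have h0 := huv i hi
    rw [map_add] at h0
    linarith [hτQ i u hu, hτQ i v hv]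

lemma sub_mem_partialSat_supportFace (hτQ : ∀ i, ∀ x ∈ Q, 0 ≤ τ i x)
    (hsat : {x | ∀ i, 0 ≤ τ i x} ⊆ saturationOf Q) {a aF aQ β q : Fin d → ℤ}
    (ha : a ∈ Q) (haF : aF ∈ supportFace Q τ a) (haFτ : ∀ i, τ i aF ≤ τ i aQ)
    (hpos : ∀ i, 0 < τ i a → τ i (a + aQ + β) ≤ 0) (hq : q ∈ Q) (hβq : β + q ∈ Q) :
    q - (a + aF) ∈ partialSat Q (supportFace Q τ a) := by
  have haaF : a + aF ∈ supportFace Q τ a := add_mem (mem_supportFace_self ha) haF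
  refine ⟨⟨q, hq, -(a + aF), neg_mem (AddSubgroup.subset_closure haaF), sub_eq_add_neg _ _⟩,
    hsat fun i => ?_⟩
  simp only [map_sub, map_add] at hpos ⊢
  have hq0 := hτQ i q hq
  have hβq0 := hτQ i _ hβq
  rw [map_add] at hβq0
  rcases (hτQ i a ha).eq_or_lt with hia | hia
  · linarith [haF.2 i hia.symm]
  · linarith [hpos i hia, haFτ i]

end SupportFace

lemma add_nonpos_of_toNat_eq_toNat_add {t u : ℤ} (h : u.toNat = (t + u).toNat) (ht : 0 < t) :
    t + u ≤ 0 := by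
  omega

lemma shiftSet_add_inter_subset {d : ℕ} {Q : AddSubmonoid (Fin d → ℤ)} {a : Fin d → ℤ}
    (ha : a ∈ Q) (β : Fin d → ℤ) :
    shiftSet (a + β) (Q : Set (Fin d → ℤ)) ∩ Q ⊆ shiftSet β (Q : Set (Fin d → ℤ)) ∩ Q := by
  rintro _ ⟨⟨q, hq, rfl⟩, hx⟩
  exact ⟨⟨a + q, Q.add_mem ha hq, by dsimp only; abel⟩, hx⟩

theorem stmt12_general {d r : ℕ} (Q : AddSubmonoid (Fin d → ℤ))
    (τ : Fin r → ((Fin d → ℤ) →+ ℤ))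
    (hτQ : ∀ i, ∀ x ∈ Q, 0 ≤ τ i x)
    (hsat : saturationOf Q = {x : Fin d → ℤ | ∀ i, 0 ≤ τ i x})
    (aQ : Fin d → ℤ)
    (haQF : ∀ F : AddSubmonoid (Fin d → ℤ), IsFaceOfMonoid Q F →
      ∃ aF ∈ F, (∀ x ∈ partialSat Q F, aF + x ∈ Q) ∧ ∀ i, τ i aF ≤ τ i aQ)
    (a : Fin d → ℤ) (ha : a ∈ Q) (β : Fin d → ℤ)
    (hplus : plusPart (fun i => τ i (aQ + β)) = plusPart (fun i => τ i (a + aQ + β))) :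
    shiftSet β (Q : Set (Fin d → ℤ)) ∩ (Q : Set (Fin d → ℤ)) =
      shiftSet (a + β) (Q : Set (Fin d → ℤ)) ∩ (Q : Set (Fin d → ℤ)) := by
  have hpos : ∀ i, 0 < τ i a → τ i (a + aQ + β) ≤ 0 := fun i hi => by
    have h := congrFun hplus i
    simp only [plusPart, add_assoc, map_add] at h ⊢
    exact add_nonpos_of_toNat_eq_toNat_add h hi
  obtain ⟨aF, haF, haFQ, haFτ⟩ := haQF _ (isFaceOfMonoid_supportFace hτQ a)
  refine subset_antisymm ?_ (shiftSet_add_inter_subset ha β)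
  rintro _ ⟨⟨q, hq, rfl⟩, hβq⟩
  have hqa : q - a ∈ Q := by
    have := haFQ _ (sub_mem_partialSat_supportFace hτQ hsat.ge ha haF haFτ hpos hq hβq)
    rwa [show aF + (q - (a + aF)) = q - a by abel] at this
  exact ⟨⟨q - a, hqa, by dsimp only; abel⟩, hβq⟩

/-- Suppose `a_Q ∈ Q` is such that for every face `F` of `Q` there is `a_F ∈ F` with
`a_F + Q^F ⊆ Q` and `τ_i(a_F) ≤ τ_i(a_Q)` for all `i`.  If `a ∈ Q` and `β ∈ ℤ^d`
satisfy `τ(a_Q + β)⁺ = τ(a + a_Q + β)⁺`, then `(β + Q) ∩ Q = (a + β + Q) ∩ Q`. -/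
theorem stmt12 {d r : ℕ} (Q : AddSubmonoid (Fin d → ℤ)) (hFG : Q.FG)
    (hgp : AddSubgroup.closure (Q : Set (Fin d → ℤ)) = ⊤)
    (τ : Fin r → ((Fin d → ℤ) →+ ℤ))
    (hτQ : ∀ i, ∀ x ∈ Q, 0 ≤ τ i x)
    (hsat : saturationOf Q = {x : Fin d → ℤ | ∀ i, 0 ≤ τ i x})
    (aQ : Fin d → ℤ) (haQ : aQ ∈ Q)
    (haQF : ∀ F : AddSubmonoid (Fin d → ℤ), IsFaceOfMonoid Q F →
      ∃ aF ∈ F, (∀ x ∈ partialSat Q F, aF + x ∈ Q) ∧ ∀ i, τ i aF ≤ τ i aQ)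
    (a : Fin d → ℤ) (ha : a ∈ Q) (β : Fin d → ℤ)
    (hplus : plusPart (fun i => τ i (aQ + β)) = plusPart (fun i => τ i (a + aQ + β))) :
    shiftSet β (Q : Set (Fin d → ℤ)) ∩ (Q : Set (Fin d → ℤ)) =
      shiftSet (a + β) (Q : Set (Fin d → ℤ)) ∩ (Q : Set (Fin d → ℤ)) :=
  stmt12_general Q τ hτQ hsat aQ haQF a ha β hplus
end

section
/- Suppose a_Q ∈ Q is such that for every face F of Q there exists a_F ∈ F with a_F + Q^F ⊆ Q and τ_i(a_F) ≤ τ_i(a_Q) for all i = 1, …, r. Then for every α in the essential set ℰ of Q and every h ∈ ℋ, τ(α + a_Q) ∈ ⟨h⟩; that is, ℰ + a_Q ⊆ ⋂_{h ∈ ℋ} τ^{-1}(⟨h⟩). -/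
/-- For `h ∈ ℕ^r`, the set `⟨h⟩ = {ζ ∈ ℤ^r : ζ_i > −h_i for some i with h_i > 0}`. -/
def angleSet {r : ℕ} (h : Fin r → ℕ) : Set (Fin r → ℤ) :=
  {ζ | ∃ i, 0 < h i ∧ -(h i : ℤ) < ζ i}

/-- The image `τ(Q) ⊆ ℕ^r` of `Q` under `τ` (which is nonnegative on `Q`). -/
def tauImage {d r : ℕ} (Q : AddSubmonoid (Fin d → ℤ))
    (τ : Fin r → ((Fin d → ℤ) →+ ℤ)) : Set (Fin r → ℕ) :=
  {v | ∃ q ∈ Q, ∀ i, (v i : ℤ) = τ i q}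

/-- The Hilbert basis `ℋ` of `τ(Q)`: the nonzero elements of `τ(Q)` that cannot be
written as a sum of two nonzero elements of `τ(Q)`. -/
def hilbertBasisOf {d r : ℕ} (Q : AddSubmonoid (Fin d → ℤ))
    (τ : Fin r → ((Fin d → ℤ) →+ ℤ)) : Set (Fin r → ℕ) :=
  {h ∈ tauImage Q τ | h ≠ 0 ∧
    ∀ a ∈ tauImage Q τ, ∀ b ∈ tauImage Q τ, a ≠ 0 → b ≠ 0 → h ≠ a + b}

/-!
Let `ε + q` be essential and `h = τ(b)`, and suppose `τ(ε + q + a_Q) ∉ ⟨h⟩`. Then translation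
by `b` does not change `(ε + Q) ∩ Q`, so `b` is a unit and `h = 0`. Indeed, if `w, ε + w ∈ Q`,
then `τ_j(w - b) ≥ τ_j(a_Q)` wherever `τ_j(b) > 0`. Let `J` be the set of indices where
`τ_j(w - b) < τ_j(a_Q)` and `F` the face of `Q` cut out by `τ_j = 0` for `j ∈ J`. Then
`b ∈ F`, and `w - b - a_F` lies in `Q + F^gp` and has `τ ≥ 0`, so it lies in `Q^F`; hence
`w - b = a_F + (w - b - a_F) ∈ Q`.
-/

section VanishingFace

variable {d r : ℕ} (Q : AddSubmonoid (Fin d → ℤ)) (τ : Fin r → ((Fin d → ℤ) →+ ℤ))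

def vanishingFace (J : Set (Fin r)) : AddSubmonoid (Fin d → ℤ) where
  carrier := {x | x ∈ Q ∧ ∀ j ∈ J, τ j x = 0}
  zero_mem' := ⟨Q.zero_mem, fun j _ => map_zero _⟩
  add_mem' hx hy := ⟨Q.add_mem hx.1 hy.1, fun j hj => by rw [map_add, hx.2 j hj, hy.2 j hj, add_zero]⟩

variable {Q τ}

theorem isFaceOfMonoid_vanishingFace (hτQ : ∀ i, ∀ x ∈ Q, 0 ≤ τ i x) (J : Set (Fin r)) :
    IsFaceOfMonoid Q (vanishingFace Q τ J) := by
  refine ⟨fun x hx => hx.1, fun x hx y hy hxy => ?_⟩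
  have hzero (j) (hj : j ∈ J) : τ j x = 0 ∧ τ j y = 0 := by
    have := hxy.2 j hj
    have := hτQ j x hx
    have := hτQ j y hy
    rw [map_add] at *
    constructor <;> linarith
  exact ⟨⟨hx, fun j hj => (hzero j hj).1⟩, ⟨hy, fun j hj => (hzero j hj).2⟩⟩

end VanishingFace

variable {d r : ℕ} {Q : AddSubmonoid (Fin d → ℤ)} {τ : Fin r → ((Fin d → ℤ) →+ ℤ)}

theorem sub_mem_of_tau_le (hτQ : ∀ i, ∀ x ∈ Q, 0 ≤ τ i x)
    (hsat : {x | ∀ i, 0 ≤ τ i x} ⊆ saturationOf Q) {aQ : Fin d → ℤ}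
    (haQF : ∀ F : AddSubmonoid (Fin d → ℤ), IsFaceOfMonoid Q F →
      ∃ aF ∈ F, (∀ x ∈ partialSat Q F, aF + x ∈ Q) ∧ ∀ i, τ i aF ≤ τ i aQ)
    {w b : Fin d → ℤ} (hw : w ∈ Q) (hb : b ∈ Q)
    (hle : ∀ j, 0 < τ j b → τ j aQ ≤ τ j (w - b)) :
    w - b ∈ Q := by
  set J : Set (Fin r) := {j | τ j (w - b) < τ j aQ}
  obtain ⟨aF, haF, haF_add, haF_le⟩ :=
    haQF _ (isFaceOfMonoid_vanishingFace hτQ J)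
  have hb_J (j) (hj : j ∈ J) : τ j b = 0 :=
    le_antisymm (not_lt.mp fun hpos => (hle j hpos).not_gt hj) (hτQ j b hb)
  have hbF : b ∈ vanishingFace Q τ J := ⟨hb, hb_J⟩
  have hmem : w - b - aF ∈ partialSat Q (vanishingFace Q τ J) := by
    refine ⟨⟨w, hw, -(b + aF), ?_, by rw [sub_sub, sub_eq_add_neg]⟩, hsat fun i => ?_⟩
    · exact neg_mem (AddSubgroup.subset_closure (add_mem hbF haF))
    by_cases hi : i ∈ J
    · have := hτQ i w hw
      simp only [map_sub, haF.2 i hi, hb_J i hi]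
      linarith
    · have := haF_le i
      have : τ i aQ ≤ τ i (w - b) := not_lt.mp hi
      simp only [map_sub] at *
      linarith
  simpa only [add_sub_cancel] using haF_add _ hmem

theorem neg_mem_of_essentialPoint {ε b : Fin d → ℤ} (hε : essentialPoint Q ε) (hb : b ∈ Q)
    (hsub : ∀ w ∈ Q, ε + w ∈ Q → w - b ∈ Q) : -b ∈ Q := by
  refine hε b hb (Set.Subset.antisymm ?_ ?_)
  · rintro _ ⟨⟨s, hs, rfl⟩, hx⟩
    exact ⟨⟨b + s, Q.add_mem hb hs, (add_left_comm ε b s).trans (add_assoc b ε s).symm⟩, hx⟩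
  · rintro _ ⟨⟨w, hw, rfl⟩, hx⟩
    exact ⟨⟨w - b, hsub w hw hx, by dsimp only; abel⟩, hx⟩

theorem stmt13_general {d r : ℕ} (Q : AddSubmonoid (Fin d → ℤ))
    (τ : Fin r → ((Fin d → ℤ) →+ ℤ))
    (hτQ : ∀ i, ∀ x ∈ Q, 0 ≤ τ i x)
    (hsat : saturationOf Q = {x : Fin d → ℤ | ∀ i, 0 ≤ τ i x})
    (aQ : Fin d → ℤ)
    (haQF : ∀ F : AddSubmonoid (Fin d → ℤ), IsFaceOfMonoid Q F →
      ∃ aF ∈ F, (∀ x ∈ partialSat Q F, aF + x ∈ Q) ∧ ∀ i, τ i aF ≤ τ i aQ) :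
    ∀ α ∈ essentialSet Q, ∀ h ∈ hilbertBasisOf Q τ,
      (fun i => τ i (α + aQ)) ∈ angleSet h := by
  rintro α ⟨ε, q, hε, hq, rfl⟩ h ⟨⟨b, hb, hτb⟩, hne, -⟩
  by_contra hnot
  simp only [angleSet, Set.mem_ofPred_eq, not_exists, not_and, not_lt] at hnot
  have hnb : -b ∈ Q := by
    refine neg_mem_of_essentialPoint hε hb fun w hw hεw =>
      sub_mem_of_tau_le hτQ hsat.ge haQF hw hb fun j hj => ?_
    have := hnot j (by exact_mod_cast (hτb j).symm ▸ hj)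
    have := hτQ j _ hεw
    have := hτQ j q hq
    simp only [map_add, map_sub, ← hτb j] at *
    linarith
  refine hne (funext fun i => ?_)
  have := hτQ i _ hnb
  rw [map_neg, ← hτb i] at this
  simp only [Pi.zero_apply]
  omega

/-- Suppose `a_Q ∈ Q` is such that for every face `F` of `Q` there is `a_F ∈ F` with
`a_F + Q^F ⊆ Q` and `τ_i(a_F) ≤ τ_i(a_Q)` for all `i`.  Then for every `α` in the
essential set `ℰ` of `Q` and every `h ∈ ℋ`, `τ(α + a_Q) ∈ ⟨h⟩`; that is,
`ℰ + a_Q ⊆ ⋂_{h ∈ ℋ} τ⁻¹(⟨h⟩)`. -/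
theorem stmt13 {d r : ℕ} (Q : AddSubmonoid (Fin d → ℤ)) (hFG : Q.FG)
    (hgp : AddSubgroup.closure (Q : Set (Fin d → ℤ)) = ⊤)
    (τ : Fin r → ((Fin d → ℤ) →+ ℤ))
    (hτQ : ∀ i, ∀ x ∈ Q, 0 ≤ τ i x)
    (hsat : saturationOf Q = {x : Fin d → ℤ | ∀ i, 0 ≤ τ i x})
    (aQ : Fin d → ℤ) (haQ : aQ ∈ Q)
    (haQF : ∀ F : AddSubmonoid (Fin d → ℤ), IsFaceOfMonoid Q F →
      ∃ aF ∈ F, (∀ x ∈ partialSat Q F, aF + x ∈ Q) ∧ ∀ i, τ i aF ≤ τ i aQ) :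
    ∀ α ∈ essentialSet Q, ∀ h ∈ hilbertBasisOf Q τ,
      (fun i => τ i (α + aQ)) ∈ angleSet h :=
  stmt13_general Q τ hτQ hsat aQ haQF
end

section
/- Let P ⊆ ℝ^d be a polytope of dimension n ≥ 1 and let F be a facet of P. If every edge of P meets F (i.e., E ∩ F ≠ ∅ for each edge E of P), then at most one vertex of P lies outside F. -/
/-- A (nonempty) face of the polytope `P`: a nonempty exposed subset of `P`. -/
def IsPolytopeFace {d : ℕ} (P F : Set (Fin d → ℝ)) : Prop :=
  F.Nonempty ∧ IsExposed ℝ P F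

/-- The dimension of a subset of `ℝ^d`: the dimension of its affine span, i.e. the
rank of the vector span of its direction. -/
noncomputable def setDim {d : ℕ} (S : Set (Fin d → ℝ)) : ℕ :=
  Module.finrank ℝ (vectorSpan ℝ S)

section Aux

open Finset

variable {d : ℕ}

lemma hull_le {M : Finset (Fin d → ℝ)} (l : (Fin d → ℝ) →L[ℝ] ℝ) {c : ℝ}
    (h : ∀ x ∈ M, l x ≤ c) : ∀ x ∈ convexHull ℝ (M : Set (Fin d → ℝ)), l x ≤ c := fun x hx =>
  convexHull_min (fun y hy => h y hy) (convex_halfSpace_le ⟨l.map_add, l.map_smul⟩ c) hx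

lemma hull_ge {M : Finset (Fin d → ℝ)} (l : (Fin d → ℝ) →L[ℝ] ℝ) {c : ℝ}
    (h : ∀ x ∈ M, c ≤ l x) : ∀ x ∈ convexHull ℝ (M : Set (Fin d → ℝ)), c ≤ l x := fun x hx =>
  convexHull_min (fun y hy => h y hy) (convex_halfSpace_ge ⟨l.map_add, l.map_smul⟩ c) hx

/-- `M` is the argmax set of some linear functional over `s`. -/
def FaceSet (s M : Finset (Fin d → ℝ)) : Prop :=
  M.Nonempty ∧ M ⊆ s ∧ ∃ l : (Fin d → ℝ) →L[ℝ] ℝ,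
    (∀ x ∈ M, ∀ y ∈ s, l y ≤ l x) ∧ (∀ x ∈ M, ∀ y ∈ s, l y = l x → y ∈ M)

/-- The convex hull of a FaceSet is the exposed face of the hull. -/
lemma faceSet_hull_eq {s M : Finset (Fin d → ℝ)} {l : (Fin d → ℝ) →L[ℝ] ℝ}
    (hM : M.Nonempty) (hMs : M ⊆ s)
    (hmax : ∀ x ∈ M, ∀ y ∈ s, l y ≤ l x) (hcl : ∀ x ∈ M, ∀ y ∈ s, l y = l x → y ∈ M) :
    convexHull ℝ (M : Set (Fin d → ℝ)) =
      {x ∈ convexHull ℝ (s : Set (Fin d → ℝ)) |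
        ∀ y ∈ convexHull ℝ (s : Set (Fin d → ℝ)), l y ≤ l x} := by
  obtain ⟨p, hp⟩ := hM
  set c := l p with hc
  have hconst : ∀ x ∈ M, l x = c := fun x hx =>
    le_antisymm (hmax p hp x (hMs hx)) (hmax x hx p (hMs hp))
  have hsle : ∀ y ∈ s, l y ≤ c := fun y hy => hmax p hp y hy
  ext x
  constructor
  · intro hx
    refine ⟨convexHull_mono (by exact_mod_cast hMs) hx, ?_⟩
    have hxc : l x = c :=
      le_antisymm (hull_le l (fun y hy => (hconst y hy).le) x hx)
        (hull_ge l (fun y hy => (hconst y hy).ge) x hx)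
    intro y hy
    rw [hxc]
    exact hull_le l hsle y hy
  · rintro ⟨hx, hmx⟩
    have hpc : c ≤ l x := hmx p (subset_convexHull ℝ _ (hMs hp))
    have hxc : l x = c := le_antisymm (hull_le l hsle x hx) hpc
    rw [Finset.convexHull_eq] at hx ⊢
    obtain ⟨w, hw0, hw1, hwx⟩ := hx
    have hxsum : x = ∑ y ∈ s, w y • y := by
      rw [← hwx, Finset.centerMass_eq_of_sum_1 _ _ hw1]; rfl
    have hlx : ∑ y ∈ s, w y * (c - l y) = 0 := by
      have : l x = ∑ y ∈ s, w y * l y := by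
        rw [hxsum]; simp [map_sum, smul_eq_mul]
      have h2 : ∑ y ∈ s, w y * c = c := by
        rw [← Finset.sum_mul, hw1, one_mul]
      calc ∑ y ∈ s, w y * (c - l y) = (∑ y ∈ s, w y * c) - ∑ y ∈ s, w y * l y := by
            rw [← Finset.sum_sub_distrib]; exact Finset.sum_congr rfl (fun y _ => by ring)
        _ = c - l x := by rw [h2, this]
        _ = 0 := by rw [hxc]; ring
    have hzero : ∀ y ∈ s, w y * (c - l y) = 0 :=
      (Finset.sum_eq_zero_iff_of_nonneg
        (fun y hy => mul_nonneg (hw0 y hy) (sub_nonneg.2 (hsle y hy)))).1 hlx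
    have hwM : ∀ y ∈ s, y ∉ M → w y = 0 := by
      intro y hy hyM
      by_contra hw
      have : c - l y = 0 := by
        rcases mul_eq_zero.1 (hzero y hy) with h | h
        · exact absurd h hw
        · exact h
      exact hyM (hcl p hp y hy (by linarith [sub_eq_zero.1 this]))
    have hsum1 : ∑ y ∈ M, w y = 1 := by
      rw [← hw1]
      exact Finset.sum_subset hMs (fun y hy hyM => hwM y hy hyM)
    refine ⟨w, fun y hy => hw0 y (hMs hy), hsum1, ?_⟩
    rw [Finset.centerMass_eq_of_sum_1 _ _ hsum1]
    have : ∑ y ∈ M, w y • y = ∑ y ∈ s, w y • y :=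
      Finset.sum_subset hMs (fun y hy hyM => by rw [hwM y hy hyM, zero_smul])
    simp only [id]
    rw [this, ← hxsum]

/-- Transitivity of FaceSet. -/
lemma FaceSet.trans {s M M₂ : Finset (Fin d → ℝ)} (h1 : FaceSet s M) (h2 : FaceSet M M₂) :
    FaceSet s M₂ := by
  classical
  obtain ⟨hMne, hMs, l₁, hmax₁, hcl₁⟩ := h1
  obtain ⟨hM₂ne, hM₂M, l₂, hmax₂, hcl₂⟩ := h2
  obtain ⟨p, hp⟩ := hM₂ne
  have hpM : p ∈ M := hM₂M hp
  have hl₁const : ∀ x ∈ M, l₁ x = l₁ p :=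
    fun x hx => le_antisymm (hmax₁ p hpM x (hMs hx)) (hmax₁ x hx p (hMs hpM))
  have hl₂const : ∀ x ∈ M₂, l₂ x = l₂ p :=
    fun x hx => le_antisymm (hmax₂ p hp x (hM₂M hx)) (hmax₂ x hx p (hM₂M hp))
  set B := s \ M with hB
  by_cases hBe : B.Nonempty
  · set T := B.sup' hBe (fun x => (l₂ x - l₂ p) / (l₁ p - l₁ x)) with hT
    set t := 1 + max 0 T with ht
    have htpos : 0 < t := by
      have := le_max_left (0:ℝ) T
      rw [ht]; linarith
    have hBden : ∀ x ∈ B, 0 < l₁ p - l₁ x := by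
      intro x hx
      obtain ⟨hxs, hxM⟩ := Finset.mem_sdiff.1 hx
      rcases lt_or_eq_of_le (hmax₁ p hpM x hxs) with h | h
      · exact sub_pos.2 h
      · exact absurd (hcl₁ p hpM x hxs h) hxM
    have hBstrict : ∀ x ∈ B, (t • l₁ + l₂) x < (t • l₁ + l₂) p := by
      intro x hx
      have hden := hBden x hx
      have hrT : (l₂ x - l₂ p) / (l₁ p - l₁ x) ≤ T :=
        Finset.le_sup' (fun x => (l₂ x - l₂ p) / (l₁ p - l₁ x)) hx
      have hrt : (l₂ x - l₂ p) / (l₁ p - l₁ x) < t := by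
        have := le_max_right (0:ℝ) T
        rw [ht]; linarith
      have : l₂ x - l₂ p < t * (l₁ p - l₁ x) := by
        rw [div_lt_iff₀ hden] at hrt; linarith
      simp only [ContinuousLinearMap.add_apply, ContinuousLinearMap.smul_apply, smul_eq_mul]
      nlinarith
    refine ⟨⟨p, hp⟩, hM₂M.trans hMs, t • l₁ + l₂, ?_, ?_⟩
    · intro x hx y hy
      by_cases hyM : y ∈ M
      · have h1 : l₁ y = l₁ x := by rw [hl₁const y hyM, hl₁const x (hM₂M hx)]
        have h2 : l₂ y ≤ l₂ x := by
          rw [hl₂const x hx]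
          exact hmax₂ p hp y hyM
        simp only [ContinuousLinearMap.add_apply, ContinuousLinearMap.smul_apply, smul_eq_mul]
        rw [h1]; linarith
      · have hyB : y ∈ B := Finset.mem_sdiff.2 ⟨hy, hyM⟩
        have := hBstrict y hyB
        have heq : (t • l₁ + l₂) p = (t • l₁ + l₂) x := by
          simp only [ContinuousLinearMap.add_apply, ContinuousLinearMap.smul_apply, smul_eq_mul]
          rw [hl₁const x (hM₂M hx), hl₂const x hx]
        linarith [heq ▸ this]
    · intro x hx y hy heq
      by_cases hyM : y ∈ M
      · have h1 : l₁ y = l₁ x := by rw [hl₁const y hyM, hl₁const x (hM₂M hx)]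
        simp only [ContinuousLinearMap.add_apply, ContinuousLinearMap.smul_apply,
          smul_eq_mul] at heq
        rw [h1] at heq
        have : l₂ y = l₂ x := by linarith
        exact hcl₂ x hx y hyM this
      · exfalso
        have hyB : y ∈ B := Finset.mem_sdiff.2 ⟨hy, hyM⟩
        have := hBstrict y hyB
        have heq2 : (t • l₁ + l₂) p = (t • l₁ + l₂) x := by
          simp only [ContinuousLinearMap.add_apply, ContinuousLinearMap.smul_apply, smul_eq_mul]
          rw [hl₁const x (hM₂M hx), hl₂const x hx]
        rw [← heq2] at heq
        linarith
  · have hMeq : M = s := Finset.Subset.antisymm hMs (fun y hy => by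
      by_contra hyM
      exact hBe ⟨y, Finset.mem_sdiff.2 ⟨hy, hyM⟩⟩)
    exact ⟨⟨p, hp⟩, hM₂M.trans hMs, l₂, by rw [← hMeq]; exact hmax₂, by rw [← hMeq]; exact hcl₂⟩

/-- Two distinct points give rank ≥ 1. -/
lemma rank_ge_one {S : Set (Fin d → ℝ)} {y z : Fin d → ℝ} (hy : y ∈ S) (hz : z ∈ S)
    (hne : y ≠ z) : 1 ≤ Module.finrank ℝ (vectorSpan ℝ S) := by
  have hmem : y - z ∈ vectorSpan ℝ S := by
    have := vsub_mem_vectorSpan ℝ hy hz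
    simpa using this
  have hne0 : y - z ≠ 0 := sub_ne_zero.2 hne
  have hle : (Submodule.span ℝ {y - z}) ≤ vectorSpan ℝ S :=
    Submodule.span_le.2 (Set.singleton_subset_iff.2 hmem)
  calc 1 = Module.finrank ℝ (Submodule.span ℝ {y - z}) := (finrank_span_singleton hne0).symm
    _ ≤ Module.finrank ℝ (vectorSpan ℝ S) := Submodule.finrank_mono hle

/-- A functional constant on `M` vanishes on `vectorSpan M`. -/
lemma const_vanish {M : Finset (Fin d → ℝ)} (l : (Fin d → ℝ) →L[ℝ] ℝ)
    (h : ∀ x ∈ M, ∀ y ∈ M, l x = l y) {u : Fin d → ℝ}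
    (hu : u ∈ vectorSpan ℝ (M : Set (Fin d → ℝ))) : l u = 0 := by
  have : vectorSpan ℝ (M : Set (Fin d → ℝ)) ≤ LinearMap.ker (l : (Fin d → ℝ) →ₗ[ℝ] ℝ) := by
    rw [vectorSpan_def]
    apply Submodule.span_le.2
    rintro v ⟨a, ha, b, hb, rfl⟩
    simp only [SetLike.mem_coe, LinearMap.mem_ker, ContinuousLinearMap.coe_coe, vsub_eq_sub,
      map_sub]
    rw [h a ha b hb]
    ring
  exact this hu

noncomputable def dotCLM (u : Fin d → ℝ) : (Fin d → ℝ) →L[ℝ] ℝ :=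
  ∑ i, u i • (ContinuousLinearMap.proj i : (Fin d → ℝ) →L[ℝ] ℝ)

lemma dotCLM_self_pos {u : Fin d → ℝ} (hu : u ≠ 0) : 0 < dotCLM u u := by
  have happ : dotCLM u u = ∑ i, u i * u i := by
    simp [dotCLM, ContinuousLinearMap.sum_apply, ContinuousLinearMap.smul_apply,
      ContinuousLinearMap.proj_apply, smul_eq_mul]
  rw [happ]
  have h : ∃ i, u i ≠ 0 := by
    by_contra h
    push_neg at h
    exact hu (funext h)
  obtain ⟨i, hi⟩ := h
  exact Finset.sum_pos' (fun j _ => mul_self_nonneg _) ⟨i, Finset.mem_univ i, mul_self_pos.2 hi⟩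

/-- The threshold trick. -/
lemma tstar {M : Finset (Fin d → ℝ)} (g f : (Fin d → ℝ) →L[ℝ] ℝ) (p : Fin d → ℝ)
    (hgt : ∀ x ∈ M, x ≠ p → g x < g p)
    {x₁ : Fin d → ℝ} (hx₁ : x₁ ∈ M) (hfx₁ : f x₁ < f p) :
    ∃ t : ℝ, 0 < t ∧ ∃ x₀ ∈ M, f x₀ < f p ∧
      (g - t • f) x₀ = (g - t • f) p ∧
      (∀ x ∈ M, (g - t • f) x ≤ (g - t • f) p) ∧
      (∀ x ∈ M, (g - t • f) x = (g - t • f) p → f x ≤ f p) := by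
  classical
  set A := M.filter (fun x => f x < f p) with hA
  have hAne : A.Nonempty := ⟨x₁, Finset.mem_filter.2 ⟨hx₁, hfx₁⟩⟩
  set r : (Fin d → ℝ) → ℝ := fun x => (g p - g x) / (f p - f x) with hr
  set t := A.inf' hAne r with ht
  have hApos : ∀ x ∈ A, 0 < r x := by
    intro x hx
    obtain ⟨hxM, hxf⟩ := Finset.mem_filter.1 hx
    have hxp : x ≠ p := fun h => absurd hxf (by rw [h]; exact lt_irrefl _)
    exact div_pos (sub_pos.2 (hgt x hxM hxp)) (sub_pos.2 hxf)
  have htpos : 0 < t := by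
    obtain ⟨x₀, hx₀, hx₀e⟩ := Finset.exists_mem_eq_inf' hAne r
    rw [ht, hx₀e]
    exact hApos x₀ hx₀
  obtain ⟨x₀, hx₀A, hx₀e⟩ := Finset.exists_mem_eq_inf' hAne r
  obtain ⟨hx₀M, hx₀f⟩ := Finset.mem_filter.1 hx₀A
  have key : ∀ x ∈ M, (g - t • f) x ≤ (g - t • f) p := by
    intro x hx
    simp only [ContinuousLinearMap.sub_apply, ContinuousLinearMap.smul_apply, smul_eq_mul]
    by_cases hxp : x = p
    · rw [hxp]
    by_cases hxf : f x < f p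
    · have hxA : x ∈ A := Finset.mem_filter.2 ⟨hx, hxf⟩
      have h1 : t ≤ r x := by rw [ht]; exact Finset.inf'_le r hxA
      have hd : 0 < f p - f x := sub_pos.2 hxf
      have h2 : t * (f p - f x) ≤ g p - g x := by
        have h3 : t ≤ (g p - g x) / (f p - f x) := h1
        exact (le_div_iff₀ hd).1 h3
      nlinarith
    · push_neg at hxf
      have := hgt x hx hxp
      nlinarith
  refine ⟨t, htpos, x₀, hx₀M, hx₀f, ?_, key, ?_⟩
  · simp only [ContinuousLinearMap.sub_apply, ContinuousLinearMap.smul_apply, smul_eq_mul]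
    have hd : f p - f x₀ ≠ 0 := ne_of_gt (sub_pos.2 hx₀f)
    have : t = (g p - g x₀) / (f p - f x₀) := by rw [ht, hx₀e]
    have h' : t * (f p - f x₀) = g p - g x₀ := by rw [this]; exact div_mul_cancel₀ _ hd
    linarith
  · intro x hx hxe
    by_contra hxf
    push_neg at hxf
    have hxp : x ≠ p := fun h => absurd hxf (by rw [h]; exact lt_irrefl _)
    have := hgt x hx hxp
    simp only [ContinuousLinearMap.sub_apply, ContinuousLinearMap.smul_apply, smul_eq_mul] at hxe
    nlinarith

/-- Every "face set" of dimension ≥ 1 contains a face set of dimension exactly 1. -/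
lemma exists_edge_aux : ∀ N : ℕ, ∀ M : Finset (Fin d → ℝ), M.card ≤ N →
    1 ≤ Module.finrank ℝ (vectorSpan ℝ (M : Set (Fin d → ℝ))) →
    ∃ M₂, FaceSet M M₂ ∧ Module.finrank ℝ (vectorSpan ℝ (M₂ : Set (Fin d → ℝ))) = 1 := by
  classical
  intro N
  induction N with
  | zero =>
    intro M hcard h1
    rw [Nat.le_zero, Finset.card_eq_zero] at hcard
    subst hcard
    rw [Finset.coe_empty, vectorSpan_empty, finrank_bot] at h1
    omega
  | succ N ih =>
    intro M hcard h1
    have hMne : M.Nonempty := by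
      rcases Finset.eq_empty_or_nonempty M with h | h
      · subst h; simp [vectorSpan_empty] at h1
      · exact h
    by_cases hr1 : Module.finrank ℝ (vectorSpan ℝ (M : Set (Fin d → ℝ))) = 1
    · refine ⟨M, ⟨hMne, Finset.Subset.refl M, 0, ?_, ?_⟩, hr1⟩
      · intro x _ y _; simp
      · intro x _ y hy _; exact hy
    have h2 : 2 ≤ Module.finrank ℝ (vectorSpan ℝ (M : Set (Fin d → ℝ))) := by omega
    have hyz : ∃ y ∈ M, ∃ z ∈ M, y ≠ z := by
      by_contra hcon
      push_neg at hcon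
      obtain ⟨p, hp⟩ := hMne
      have hsub : (M : Set (Fin d → ℝ)) ⊆ {p} := fun x hx => hcon x hx p hp
      have := vectorSpan_mono ℝ hsub
      rw [vectorSpan_singleton] at this
      have h4 := Submodule.finrank_mono (M := (Fin d → ℝ)) this
      rw [finrank_bot] at h4
      omega
    obtain ⟨y, hy, z, hz, hyzne⟩ := hyz
    obtain ⟨i, hi⟩ : ∃ i, y i ≠ z i := by
      by_contra hcon; push_neg at hcon; exact hyzne (funext hcon)
    set g : (Fin d → ℝ) →L[ℝ] ℝ := ContinuousLinearMap.proj i with hg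
    have hgy : g y = y i := rfl
    have hgz : g z = z i := rfl
    set c := M.sup' hMne g with hc
    set M₁ := M.filter (fun x => g x = c) with hM₁
    obtain ⟨pm, hpm, hpme⟩ := Finset.exists_mem_eq_sup' hMne (⇑g)
    have hpmM₁ : pm ∈ M₁ := Finset.mem_filter.2 ⟨hpm, hpme.symm⟩
    have hface₁ : FaceSet M M₁ := by
      refine ⟨⟨pm, hpmM₁⟩, Finset.filter_subset _ _, g, ?_, ?_⟩
      · intro x hx yy hyy
        rw [(Finset.mem_filter.1 hx).2]
        exact Finset.le_sup' (⇑g) hyy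
      · intro x hx yy hyy hyx
        exact Finset.mem_filter.2 ⟨hyy, by rw [hyx, (Finset.mem_filter.1 hx).2]⟩
    have hM₁ssub : M₁ ⊂ M := by
      refine Finset.ssubset_iff_of_subset (Finset.filter_subset _ _) |>.2 ?_
      rcases lt_or_gt_of_ne (show g y ≠ g z from by rwa [hgy, hgz, ne_eq]) with h | h
      · exact ⟨y, hy, fun hmem => by
          have := (Finset.mem_filter.1 hmem).2
          have hzc : g z ≤ c := Finset.le_sup' (⇑g) hz
          linarith⟩
      · exact ⟨z, hz, fun hmem => by
          have := (Finset.mem_filter.1 hmem).2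
          have hyc : g y ≤ c := Finset.le_sup' (⇑g) hy
          linarith⟩
    have hcard₁ : M₁.card ≤ N := by
      have := Finset.card_lt_card hM₁ssub
      omega
    by_cases hsplit : ∃ a ∈ M₁, ∃ b ∈ M₁, a ≠ b
    · obtain ⟨a, ha, b, hb, hab⟩ := hsplit
      have hrk₁ : 1 ≤ Module.finrank ℝ (vectorSpan ℝ (M₁ : Set (Fin d → ℝ))) :=
        rank_ge_one (by exact_mod_cast ha) (by exact_mod_cast hb) hab
      obtain ⟨M₂, hf₂, hr₂⟩ := ih M₁ hcard₁ hrk₁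
      exact ⟨M₂, FaceSet.trans hface₁ hf₂, hr₂⟩
    · push_neg at hsplit
      set p := pm with hp
      have hexp : ∀ x ∈ M, x ≠ p → g x < g p := by
        intro x hx hxp
        have hle : g x ≤ c := Finset.le_sup' (⇑g) hx
        rcases lt_or_eq_of_le hle with h | h
        · rw [hp, ← hpme]; exact h
        · exact absurd (hsplit x (Finset.mem_filter.2 ⟨hx, h⟩) p hpmM₁) hxp
      have hu₁mem : y - z ∈ vectorSpan ℝ (M : Set (Fin d → ℝ)) := by
        have := vsub_mem_vectorSpan ℝ (show y ∈ (M : Set (Fin d → ℝ)) from hy)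
          (show z ∈ (M : Set (Fin d → ℝ)) from hz)
        simpa using this
      have hgu₁ : g (y - z) ≠ 0 := by
        rw [map_sub, hgy, hgz]; exact sub_ne_zero.2 hi
      have hu₁ne : y - z ≠ 0 := fun h => hgu₁ (by rw [h, map_zero])
      have hu₂ : ∃ u₂ ∈ vectorSpan ℝ (M : Set (Fin d → ℝ)), u₂ ∉ Submodule.span ℝ {y - z} := by
        by_contra hcon
        push_neg at hcon
        have hle : vectorSpan ℝ (M : Set (Fin d → ℝ)) ≤ Submodule.span ℝ {y - z} :=
          fun u hu => hcon u hu
        have := Submodule.finrank_mono hle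
        rw [finrank_span_singleton hu₁ne] at this
        omega
      obtain ⟨u₂, hu₂mem, hu₂ns⟩ := hu₂
      set u' := u₂ - (g u₂ / g (y - z)) • (y - z) with hu'
      have hu'mem : u' ∈ vectorSpan ℝ (M : Set (Fin d → ℝ)) :=
        Submodule.sub_mem _ hu₂mem (Submodule.smul_mem _ _ hu₁mem)
      have hgu' : g u' = 0 := by
        rw [hu', map_sub, map_smul, smul_eq_mul, div_mul_cancel₀ _ hgu₁, sub_self]
      have hu'ne : u' ≠ 0 := by
        intro h0
        apply hu₂ns
        rw [Submodule.mem_span_singleton]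
        exact ⟨g u₂ / g (y - z), (sub_eq_zero.mp h0).symm⟩
      set f0 := dotCLM u' with hf0
      have hf0pos : 0 < f0 u' := dotCLM_self_pos hu'ne
      have hpM : p ∈ M := hpm
      have hfnc : ∃ x₁ ∈ M, f0 x₁ ≠ f0 p := by
        by_contra hcon
        push_neg at hcon
        have hconst : ∀ x ∈ M, ∀ y ∈ M, f0 x = f0 y := fun x hx y' hy' => by
          rw [hcon x hx, hcon y' hy']
        have := const_vanish f0 hconst hu'mem
        linarith
      obtain ⟨x₁, hx₁, hfx₁ne⟩ := hfnc
      obtain ⟨f, hfx₁, hfu'⟩ : ∃ f : (Fin d → ℝ) →L[ℝ] ℝ, f x₁ < f p ∧ f u' ≠ 0 := by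
        rcases lt_or_gt_of_ne hfx₁ne with h | h
        · exact ⟨f0, h, ne_of_gt hf0pos⟩
        · refine ⟨-f0, by simpa using h, ?_⟩
          simp only [ContinuousLinearMap.neg_apply, ne_eq, neg_eq_zero]
          exact ne_of_gt hf0pos
      obtain ⟨t, htpos, x₀, hx₀M, hx₀f, hx₀eq, hmax, hfle⟩ := tstar g f p hexp hx₁ hfx₁
      set h := g - t • f with hhdef
      set Mstar := M.filter (fun x => h x = h p) with hMstar
      have hpstar : p ∈ Mstar := Finset.mem_filter.2 ⟨hpM, rfl⟩
      have hx₀star : x₀ ∈ Mstar := Finset.mem_filter.2 ⟨hx₀M, hx₀eq⟩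
      have hfacestar : FaceSet M Mstar := by
        refine ⟨⟨p, hpstar⟩, Finset.filter_subset _ _, h, ?_, ?_⟩
        · intro x hx yy hyy
          rw [(Finset.mem_filter.1 hx).2]
          exact hmax yy hyy
        · intro x hx yy hyy hyx
          exact Finset.mem_filter.2 ⟨hyy, by rw [hyx, (Finset.mem_filter.1 hx).2]⟩
      have hrkstar : 1 ≤ Module.finrank ℝ (vectorSpan ℝ (Mstar : Set (Fin d → ℝ))) := by
        refine rank_ge_one (show x₀ ∈ (Mstar : Set (Fin d → ℝ)) from hx₀star)
          (show p ∈ (Mstar : Set (Fin d → ℝ)) from hpstar) ?_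
        intro hcon
        rw [hcon] at hx₀f
        exact lt_irrefl _ hx₀f
      have hhu' : h u' ≠ 0 := by
        rw [hhdef]
        simp only [ContinuousLinearMap.sub_apply, ContinuousLinearMap.smul_apply, smul_eq_mul,
          hgu']
        intro hcon
        have : t * f u' = 0 := by linarith
        rcases mul_eq_zero.1 this with h' | h'
        · exact (ne_of_gt htpos) h'
        · exact hfu' h'
      have hssubstar : Mstar ⊂ M := by
        refine Finset.ssubset_iff_of_subset (Finset.filter_subset _ _) |>.2 ?_
        by_contra hcon
        push_neg at hcon
        have hconst : ∀ x ∈ M, ∀ y ∈ M, h x = h y := by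
          intro x hx y' hy'
          rw [(Finset.mem_filter.1 (hcon x hx)).2, (Finset.mem_filter.1 (hcon y' hy')).2]
        exact hhu' (const_vanish h hconst hu'mem)
      have hcardstar : Mstar.card ≤ N := by
        have := Finset.card_lt_card hssubstar
        omega
      obtain ⟨M₂, hf₂, hr₂⟩ := ih Mstar hcardstar hrkstar
      exact ⟨M₂, FaceSet.trans hfacestar hf₂, hr₂⟩

end Aux

/-- Let `P ⊆ ℝ^d` be a polytope of dimension `n ≥ 1` and let `F` be a facet of `P`.
If every edge of `P` meets `F`, then at most one vertex of `P` lies outside `F`. -/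
theorem stmt16 {d : ℕ} (s : Finset (Fin d → ℝ)) (hs : s.Nonempty)
    (P : Set (Fin d → ℝ)) (hP : P = convexHull ℝ (s : Set (Fin d → ℝ)))
    (n : ℕ) (hn : 1 ≤ n) (hdim : setDim P = n)
    (F : Set (Fin d → ℝ)) (hF : IsPolytopeFace P F) (hFdim : setDim F = n - 1)
    (hmeet : ∀ E : Set (Fin d → ℝ),
      IsPolytopeFace P E → setDim E = 1 → (E ∩ F).Nonempty) :
    ∀ v w : Fin d → ℝ, IsPolytopeFace P {v} → IsPolytopeFace P {w} →
      v ∉ F → w ∉ F → v = w := by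
  classical
  intro v w hv hw hvF hwF
  by_contra hvw
  obtain ⟨f, hFeq⟩ := hF.2 hF.1
  obtain ⟨gv, hveq⟩ := hv.2 ⟨v, rfl⟩
  obtain ⟨gw, hweq⟩ := hw.2 ⟨w, rfl⟩
  have hvmem : v ∈ {x ∈ P | ∀ y ∈ P, gv y ≤ gv x} := hveq ▸ rfl
  obtain ⟨hvP, hgvmax⟩ := hvmem
  have hwmem : w ∈ {x ∈ P | ∀ y ∈ P, gw y ≤ gw x} := hweq ▸ rfl
  obtain ⟨hwP, hgwmax⟩ := hwmem
  have hgvuniq : ∀ x ∈ P, (∀ y ∈ P, gv y ≤ gv x) → x = v := by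
    intro x hx hmx
    have : x ∈ ({v} : Set (Fin d → ℝ)) := hveq ▸ (⟨hx, hmx⟩ : x ∈ {x ∈ P | ∀ y ∈ P, gv y ≤ gv x})
    exact this
  have hgwuniq : ∀ x ∈ P, (∀ y ∈ P, gw y ≤ gw x) → x = w := by
    intro x hx hmx
    have : x ∈ ({w} : Set (Fin d → ℝ)) := hweq ▸ (⟨hx, hmx⟩ : x ∈ {x ∈ P | ∀ y ∈ P, gw y ≤ gw x})
    exact this
  have hsP : (s : Set (Fin d → ℝ)) ⊆ P := by rw [hP]; exact subset_convexHull ℝ _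
  -- v and w belong to s
  have hmem_s : ∀ (u : Fin d → ℝ) (g : (Fin d → ℝ) →L[ℝ] ℝ), u ∈ P →
      (∀ y ∈ P, g y ≤ g u) → (∀ x ∈ P, (∀ y ∈ P, g y ≤ g x) → x = u) → u ∈ s := by
    intro u g huP hgmax hguniq
    obtain ⟨xm, hxm, hxme⟩ := Finset.exists_mem_eq_sup' hs (⇑g)
    have hxmP : xm ∈ P := hsP hxm
    have hle : g u ≤ g xm := by
      have hb : ∀ x ∈ s, g x ≤ g xm := fun x hx =>
        le_trans (Finset.le_sup' (⇑g) hx) (le_of_eq hxme)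
      exact hull_le g hb u (hP ▸ huP)
    have hge : g xm ≤ g u := hgmax xm hxmP
    have heq : g xm = g u := le_antisymm hge hle
    have : xm = u := hguniq xm hxmP (fun y hy => heq ▸ hgmax y hy)
    rwa [← this]
  have hvs : v ∈ s := hmem_s v gv hvP hgvmax hgvuniq
  have hws : w ∈ s := hmem_s w gw hwP hgwmax hgwuniq
  have hgvstrict : ∀ x ∈ s, x ≠ v → gv x < gv v := by
    intro x hx hxv
    have hxP : x ∈ P := hsP hx
    rcases lt_or_eq_of_le (hgvmax x hxP) with h | h
    · exact h
    · exact absurd (hgvuniq x hxP (fun y hy => h ▸ hgvmax y hy)) hxv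
  have hgwstrict : ∀ x ∈ s, x ≠ w → gw x < gw w := by
    intro x hx hxw
    have hxP : x ∈ P := hsP hx
    rcases lt_or_eq_of_le (hgwmax x hxP) with h | h
    · exact h
    · exact absurd (hgwuniq x hxP (fun y hy => h ▸ hgwmax y hy)) hxw
  -- being outside F gives a point of P with strictly larger f-value
  have houtside : ∀ u : Fin d → ℝ, u ∈ P → u ∉ F → ∃ y ∈ P, f u < f y := by
    intro u huP huF
    by_contra hcon
    push_neg at hcon
    exact huF (hFeq ▸ (⟨huP, hcon⟩ : u ∈ {x ∈ P | ∀ y ∈ P, f y ≤ f x}))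
  obtain ⟨yv, hyvP, hyv⟩ := houtside v hvP (hFeq ▸ hvF)
  obtain ⟨yw, hywP, hyw⟩ := houtside w hwP (hFeq ▸ hwF)
  have hFval : ∀ z ∈ F, f v < f z ∧ f w < f z := by
    intro z hz
    have hz' : z ∈ {x ∈ P | ∀ y ∈ P, f y ≤ f x} := hFeq ▸ hz
    exact ⟨lt_of_lt_of_le hyv (hz'.2 yv hyvP), lt_of_lt_of_le hyw (hz'.2 yw hywP)⟩
  -- Construct a face set M' of s containing two distinct points, with f bounded
  have hM' : ∃ M' : Finset (Fin d → ℝ), FaceSet s M' ∧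
      (∃ a ∈ M', ∃ b ∈ M', a ≠ b) ∧ (∀ x ∈ M', f x ≤ max (f v) (f w)) := by
    by_cases hAv : ∃ x ∈ s, f x < f v
    · obtain ⟨x₁, hx₁, hfx₁⟩ := hAv
      obtain ⟨t, htpos, x₀, hx₀s, hx₀f, hx₀eq, hmax, hfle⟩ := tstar gv f v hgvstrict hx₁ hfx₁
      set h := gv - t • f with hhdef
      refine ⟨s.filter (fun x => h x = h v), ⟨⟨x₀, Finset.mem_filter.2 ⟨hx₀s, hx₀eq⟩⟩,
        Finset.filter_subset _ _, h, ?_, ?_⟩, ⟨x₀, Finset.mem_filter.2 ⟨hx₀s, hx₀eq⟩,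
        v, Finset.mem_filter.2 ⟨hvs, rfl⟩, fun hc => absurd (hc ▸ hx₀f) (lt_irrefl _)⟩, ?_⟩
      · intro x hx yy hyy
        rw [(Finset.mem_filter.1 hx).2]
        exact hmax yy hyy
      · intro x hx yy hyy hyx
        exact Finset.mem_filter.2 ⟨hyy, by rw [hyx, (Finset.mem_filter.1 hx).2]⟩
      · intro x hx
        exact le_trans (hfle x (Finset.mem_filter.1 hx).1 (Finset.mem_filter.1 hx).2)
          (le_max_left _ _)
    by_cases hAw : ∃ x ∈ s, f x < f w
    · obtain ⟨x₁, hx₁, hfx₁⟩ := hAw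
      obtain ⟨t, htpos, x₀, hx₀s, hx₀f, hx₀eq, hmax, hfle⟩ := tstar gw f w hgwstrict hx₁ hfx₁
      set h := gw - t • f with hhdef
      refine ⟨s.filter (fun x => h x = h w), ⟨⟨x₀, Finset.mem_filter.2 ⟨hx₀s, hx₀eq⟩⟩,
        Finset.filter_subset _ _, h, ?_, ?_⟩, ⟨x₀, Finset.mem_filter.2 ⟨hx₀s, hx₀eq⟩,
        w, Finset.mem_filter.2 ⟨hws, rfl⟩, fun hc => absurd (hc ▸ hx₀f) (lt_irrefl _)⟩, ?_⟩
      · intro x hx yy hyy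
        rw [(Finset.mem_filter.1 hx).2]
        exact hmax yy hyy
      · intro x hx yy hyy hyx
        exact Finset.mem_filter.2 ⟨hyy, by rw [hyx, (Finset.mem_filter.1 hx).2]⟩
      · intro x hx
        exact le_trans (hfle x (Finset.mem_filter.1 hx).1 (Finset.mem_filter.1 hx).2)
          (le_max_right _ _)
    · push_neg at hAv hAw
      have hfwv : f w = f v := le_antisymm (hAw v hvs) (hAv w hws)
      refine ⟨s.filter (fun x => f x = f v), ⟨⟨v, Finset.mem_filter.2 ⟨hvs, rfl⟩⟩,
        Finset.filter_subset _ _, -f, ?_, ?_⟩, ⟨v, Finset.mem_filter.2 ⟨hvs, rfl⟩,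
        w, Finset.mem_filter.2 ⟨hws, hfwv⟩, fun hc => hvw hc⟩, ?_⟩
      · intro x hx yy hyy
        simp only [ContinuousLinearMap.neg_apply, neg_le_neg_iff]
        rw [(Finset.mem_filter.1 hx).2]
        exact hAv yy hyy
      · intro x hx yy hyy hyx
        simp only [ContinuousLinearMap.neg_apply, neg_inj] at hyx
        exact Finset.mem_filter.2 ⟨hyy, by rw [hyx, (Finset.mem_filter.1 hx).2]⟩
      · intro x hx
        rw [(Finset.mem_filter.1 hx).2]
        exact le_max_left _ _
  obtain ⟨M', hfaceM', ⟨a, ha, b, hb, hab⟩, hfbound⟩ := hM'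
  have hrkM' : 1 ≤ Module.finrank ℝ (vectorSpan ℝ (M' : Set (Fin d → ℝ))) :=
    rank_ge_one (show a ∈ (M' : Set (Fin d → ℝ)) from ha)
      (show b ∈ (M' : Set (Fin d → ℝ)) from hb) hab
  obtain ⟨M₂, hfM₂, hrkM₂⟩ := exists_edge_aux M'.card M' le_rfl hrkM'
  have hfaceM₂ : FaceSet s M₂ := FaceSet.trans hfaceM' hfM₂
  obtain ⟨hM₂ne, hM₂s, l₂, hmax₂, hcl₂⟩ := hfaceM₂
  set E := convexHull ℝ (M₂ : Set (Fin d → ℝ)) with hE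
  have hEface : IsPolytopeFace P E := by
    constructor
    · obtain ⟨x, hx⟩ := hM₂ne
      exact ⟨x, subset_convexHull ℝ _ hx⟩
    · intro _
      refine ⟨l₂, ?_⟩
      rw [hE, hP]
      exact faceSet_hull_eq hM₂ne hM₂s hmax₂ hcl₂
  have hEdim : setDim E = 1 := by
    rw [setDim, hE, ← direction_affineSpan, affineSpan_convexHull, direction_affineSpan]
    exact hrkM₂
  obtain ⟨z, hzE, hzF⟩ := hmeet E hEface hEdim
  have hzle : f z ≤ max (f v) (f w) := by
    have hM₂M' : M₂ ⊆ M' := hfM₂.2.1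
    exact hull_le f (fun x hx => hfbound x (hM₂M' hx)) z hzE
  obtain ⟨h1, h2⟩ := hFval z hzF
  rcases max_cases (f v) (f w) with ⟨he, _⟩ | ⟨he, _⟩ <;> rw [he] at hzle <;> linarith
end
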